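/- In the differential graded exterior algebra over Z/p on generators h_{1,j}, h_{2,j} (j ∈ Z/3), with differential d(h_{1,j}) = 0, d(h_{2,j}) = −h_{1,j}h_{1,j+1} extended by the graded Leibniz rule, the element e_{3,0}^2 + e_{3,1}^2 + e_{3,2}^2 (where e_{3,i} = h_{1,i}h_{2,i+1} + h_{2,i}h_{1,i+2}) is a coboundary: there exists a degree-3 element y with d(y) = e_{3,0}^2 + e_{3,1}^2 + e_{3,2}^2. -/
import Mathlib


open ExteriorAlgebra

/-- The exterior algebra over `ℤ/p` on generators `h_{1,j}, h_{2,j}`, `j ∈ ℤ/3`. -/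
abbrev MayAlg2 (p : ℕ) : Type :=
  ExteriorAlgebra (ZMod p) ((Fin 2 × ZMod 3) → ZMod p)

/-- The generator `h_{i+1,j}` (so `hGen p 0 j` is `h_{1,j}`, `hGen p 1 j` is `h_{2,j}`). -/
noncomputable def hGen (p : ℕ) (i : Fin 2) (j : ZMod 3) : MayAlg2 p :=
  ExteriorAlgebra.ι (ZMod p) (Pi.single (i, j) (1 : ZMod p))

/-- `e_{3,i} = h_{1,i}h_{2,i+1} + h_{2,i}h_{1,i+2}`. -/
noncomputable def eThree (p : ℕ) (i : ZMod 3) : MayAlg2 p :=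
  hGen p 0 i * hGen p 1 (i + 1) + hGen p 1 i * hGen p 0 (i + 2)

lemma hGen_swap (p : ℕ) (i : Fin 2) (j : ZMod 3) (i' : Fin 2) (j' : ZMod 3) :
    hGen p i j * hGen p i' j' = -(hGen p i' j' * hGen p i j) := by
  rw [eq_neg_iff_add_eq_zero]
  exact ι_add_mul_swap _ _

lemma hGen_swap' (p : ℕ) (i : Fin 2) (j : ZMod 3) (i' : Fin 2) (j' : ZMod 3) (c : MayAlg2 p) :
    hGen p i j * (hGen p i' j' * c) = -(hGen p i' j' * (hGen p i j * c)) := by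
  rw [← mul_assoc, hGen_swap, neg_mul, mul_assoc]

lemma hGen_sq (p : ℕ) (i : Fin 2) (j : ZMod 3) :
    hGen p i j * hGen p i j = 0 := ι_sq_zero _

lemma hGen_sq' (p : ℕ) (i : Fin 2) (j : ZMod 3) (c : MayAlg2 p) :
    hGen p i j * (hGen p i j * c) = 0 := by
  rw [← mul_assoc, hGen_sq, zero_mul]

/-- `e_{3,0}² + e_{3,1}² + e_{3,2}²` is a coboundary: it equals `d y` for some
degree-3 element `y`. -/
theorem stmt_15 (p : ℕ) (hp : p.Prime) (hodd : Odd p) (d : MayAlg2 p →ₗ[ZMod p] MayAlg2 p)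
    (hd1 : ∀ j : ZMod 3, d (hGen p 0 j) = 0)
    (hd2 : ∀ j : ZMod 3, d (hGen p 1 j) = -(hGen p 0 j * hGen p 0 (j + 1)))
    (hLeib : ∀ (n : ℕ) (x y : MayAlg2 p),
      x ∈ (LinearMap.range (ExteriorAlgebra.ι (ZMod p) :
            ((Fin 2 × ZMod 3) → ZMod p) →ₗ[ZMod p] MayAlg2 p) ^ n :
            Submodule (ZMod p) (MayAlg2 p)) →
      d (x * y) = d x * y + ((-1 : ZMod p) ^ n) • (x * d y)) :
    ∃ y : MayAlg2 p,
      y ∈ (LinearMap.range (ExteriorAlgebra.ι (ZMod p) :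
            ((Fin 2 × ZMod 3) → ZMod p) →ₗ[ZMod p] MayAlg2 p) ^ 3 :
            Submodule (ZMod p) (MayAlg2 p)) ∧
      d y = eThree p 0 ^ 2 + eThree p 1 ^ 2 + eThree p 2 ^ 2 := by
  set R : Submodule (ZMod p) (MayAlg2 p) :=
    LinearMap.range (ExteriorAlgebra.ι (ZMod p) :
      ((Fin 2 × ZMod 3) → ZMod p) →ₗ[ZMod p] MayAlg2 p) with hR
  have memR : ∀ (i : Fin 2) (j : ZMod 3), hGen p i j ∈ R := fun i j => ⟨_, rfl⟩
  have mem1 : ∀ (i : Fin 2) (j : ZMod 3), hGen p i j ∈ R ^ 1 := by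
    intro i j; rw [pow_one]; exact memR i j
  refine ⟨(-2 : ZMod p) • (hGen p 1 0 * (hGen p 1 1 * hGen p 1 2)), ?_, ?_⟩
  · refine Submodule.smul_mem _ _ ?_
    have h3 : R ^ 3 = R * (R * R) := by rw [pow_succ', pow_succ', pow_one]
    rw [h3]
    exact Submodule.mul_mem_mul (memR 1 0)
      (Submodule.mul_mem_mul (memR 1 1) (memR 1 2))
  · have k2 : d (hGen p 1 1 * hGen p 1 2) =
        d (hGen p 1 1) * hGen p 1 2 + ((-1 : ZMod p) ^ 1) • (hGen p 1 1 * d (hGen p 1 2)) :=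
      hLeib 1 _ _ (mem1 1 1)
    have k3 : d (hGen p 1 0 * (hGen p 1 1 * hGen p 1 2)) =
        d (hGen p 1 0) * (hGen p 1 1 * hGen p 1 2) +
          ((-1 : ZMod p) ^ 1) • (hGen p 1 0 * d (hGen p 1 1 * hGen p 1 2)) :=
      hLeib 1 _ _ (mem1 1 0)
    rw [map_smul, k3, k2, hd2, hd2, hd2]
    simp only [eThree, show (0:ZMod 3)+1 = 1 from rfl, show (0:ZMod 3)+2 = 2 from rfl,
      show (1:ZMod 3)+1 = 2 from rfl, show (1:ZMod 3)+2 = 0 by decide,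
      show (2:ZMod 3)+1 = 0 by decide, show (2:ZMod 3)+2 = 1 by decide]
    simp only [pow_one, neg_smul, one_smul, mul_add, add_mul, mul_neg, neg_mul, mul_assoc,
      sq,
      hGen_swap p 0 1 0 0, hGen_swap' p 0 1 0 0,
      hGen_swap p 0 2 0 0, hGen_swap' p 0 2 0 0,
      hGen_swap p 0 2 0 1, hGen_swap' p 0 2 0 1,
      hGen_swap p 1 0 0 0, hGen_swap' p 1 0 0 0,
      hGen_swap p 1 0 0 1, hGen_swap' p 1 0 0 1,
      hGen_swap p 1 0 0 2, hGen_swap' p 1 0 0 2,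
      hGen_swap p 1 1 0 0, hGen_swap' p 1 1 0 0,
      hGen_swap p 1 1 0 1, hGen_swap' p 1 1 0 1,
      hGen_swap p 1 1 0 2, hGen_swap' p 1 1 0 2,
      hGen_swap p 1 2 0 0, hGen_swap' p 1 2 0 0,
      hGen_swap p 1 2 0 1, hGen_swap' p 1 2 0 1,
      hGen_swap p 1 2 0 2, hGen_swap' p 1 2 0 2,
      hGen_swap p 1 1 1 0, hGen_swap' p 1 1 1 0,
      hGen_swap p 1 2 1 0, hGen_swap' p 1 2 1 0,
      hGen_swap p 1 2 1 1, hGen_swap' p 1 2 1 1,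
      hGen_sq p, hGen_sq' p,
      mul_zero, zero_mul, neg_neg, neg_zero, add_zero, zero_add, smul_neg]
    module
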